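/- Consider the network G with V_G = {r,s,t}, E_G = {(t,s),(s,r)}, edge costs c_E(t,s) = c_E(s,r) = 1, edge capacities u_E ≡ 10, and the request with root r, terminals T = {t}, Steiner sites S = {s}, root capacity u_r = 1, Steiner capacity u_S(s) = 10 and activation cost c_S(s) = 5. In the LP relaxation of IP-A-CVSAP (where x_s ∈ [0,1] and f : E_ext → ℝ_{≥0}) without the directed Steiner cuts (IP-3), the point with f(t,s) = 1, f(s,r) = 1/10, x_s = 1/10, f(o⁺,t) = 1, f(o⁺,s) = 1/10, f(s,o⁻_S) = 1, f(r,o⁻_r) = 1/10 is feasible and has cost C_IP = 1.6, whereas every point that is feasible for the LP relaxation including the directed Steiner cuts (IP-3) has cost C_IP ≥ 2. Hence the directed Steiner cuts strictly strengthen the LP relaxation of IP-A-CVSAP. -/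

import Mathlib

/-! Formalization of the Constrained Virtual Steiner Arborescence Problem (CVSAP),
its single-commodity flow IP formulation, and related notions. -/

/-- Vertices of the extended graph: original vertices plus super source `src`,
super sink `sinkS` for Steiner nodes and super sink `sinkR` for the root. -/
inductive ExtV (V : Type) where
  | orig : V → ExtV V
  | src : ExtV V
  | sinkS : ExtV V
  | sinkR : ExtV V
deriving DecidableEq

open ExtV

/-- A (finite) capacitated directed network. -/
structure Network (V : Type) [DecidableEq V] where
  E : Finset (V × V)
  uE : V × V → ℕ
  cE : V × V → ℝ

/-- A request `R = (root, S, T, u_r, c_S, u_S)`. -/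
structure Request (V : Type) [DecidableEq V] where
  root : V
  S : Finset V
  T : Finset V
  ur : ℕ
  cS : V → ℝ
  uS : V → ℕ

variable {V : Type} [DecidableEq V]

/-- Well-formedness: root is neither terminal nor Steiner site, Steiner sites and terminals
are disjoint, and all costs are positive. -/
def RequestWF (N : Network V) (R : Request V) : Prop :=
  R.root ∉ R.T ∧ R.root ∉ R.S ∧ Disjoint R.S R.T ∧
    (∀ s ∈ R.S, 0 < R.cS s) ∧ (∀ e ∈ N.E, 0 < N.cE e)

/-- Edge set of the extended graph `G_ext`. -/
def Eext (N : Network V) (R : Request V) : Finset (ExtV V × ExtV V) :=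
  (N.E.image fun e => (orig e.1, orig e.2)) ∪
    ({(orig R.root, sinkR)} : Finset (ExtV V × ExtV V)) ∪
    (R.S.image fun s => (orig s, sinkS)) ∪
    (R.S.image fun s => (src, orig s)) ∪
    (R.T.image fun t => (src, orig t))

/-- `E_R`: the extended edges without the edges into the Steiner super sink. -/
def ERext (N : Network V) (R : Request V) : Finset (ExtV V × ExtV V) :=
  (Eext N R).filter fun e => e.2 ≠ sinkS

/-- Edges of `F` leaving node `v`. -/
def outV (F : Finset (ExtV V × ExtV V)) (v : ExtV V) : Finset (ExtV V × ExtV V) :=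
  F.filter fun e => e.1 = v

/-- Edges of `F` entering node `v`. -/
def inV (F : Finset (ExtV V × ExtV V)) (v : ExtV V) : Finset (ExtV V × ExtV V) :=
  F.filter fun e => e.2 = v

/-- Edges of `F` leaving the node set `W`. -/
def outSet (F : Finset (ExtV V × ExtV V)) (W : Finset (ExtV V)) : Finset (ExtV V × ExtV V) :=
  F.filter fun e => e.1 ∈ W ∧ e.2 ∉ W

/-- Total flow of `f` on the edge set `F`. -/
def fSum (f : ExtV V × ExtV V → ℕ) (F : Finset (ExtV V × ExtV V)) : ℕ :=
  ∑ e ∈ F, f e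

/-- Embedding of a set of original nodes into the extended graph. -/
def extW (W : Finset V) : Finset (ExtV V) := W.image orig

/-- A walk in the support graph `G^f_ext`: consecutive nodes are joined by extended
edges carrying positive flow. -/
def IsSupportWalk (N : Network V) (R : Request V) (f : ExtV V × ExtV V → ℕ)
    (p : List (ExtV V)) : Prop :=
  p.Chain' fun a b => (a, b) ∈ Eext N R ∧ 1 ≤ f (a, b)

/-- (IP-1): flow conservation at all original nodes. -/
def IP1 (N : Network V) (R : Request V) (f : ExtV V × ExtV V → ℕ) : Prop :=
  ∀ v : V, fSum f (outV (Eext N R) (orig v)) = fSum f (inV (Eext N R) (orig v))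

/-- (IP-2): connectivity inequalities for activated Steiner sites. -/
def IP2 (N : Network V) (R : Request V) (x : V → ℕ) (f : ExtV V × ExtV V → ℕ) : Prop :=
  ∀ W : Finset V, ∀ s ∈ W, s ∈ R.S → x s ≤ fSum f (outSet (ERext N R) (extW W))

/-- (IP-3): directed Steiner cuts for terminals. -/
def IP3 (N : Network V) (R : Request V) (f : ExtV V × ExtV V → ℕ) : Prop :=
  ∀ W : Finset V, (W ∩ R.T).Nonempty → 1 ≤ fSum f (outSet (ERext N R) (extW W))

/-- Feasibility for the integer program IP-A-CVSAP. -/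
def IPFeasible (N : Network V) (R : Request V) (x : V → ℕ) (f : ExtV V × ExtV V → ℕ) : Prop :=
  (∀ s ∈ R.S, x s ≤ 1) ∧
  IP1 N R f ∧
  IP2 N R x f ∧
  IP3 N R f ∧
  (∀ s ∈ R.S, x s ≤ f (orig s, sinkS)) ∧
  (∀ s ∈ R.S, f (orig s, sinkS) ≤ R.uS s * x s) ∧
  f (orig R.root, sinkR) ≤ R.ur ∧
  (∀ e ∈ N.E, f (orig e.1, orig e.2) ≤ N.uE e) ∧
  (∀ t ∈ R.T, f (src, orig t) = 1) ∧
  (∀ s ∈ R.S, f (src, orig s) = x s)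

/-- Objective value of IP-A-CVSAP. -/
noncomputable def costIP (N : Network V) (R : Request V) (x : V → ℕ)
    (f : ExtV V × ExtV V → ℕ) : ℝ :=
  ∑ e ∈ N.E, N.cE e * f (orig e.1, orig e.2) + ∑ s ∈ R.S, R.cS s * x s

/-- A Virtual Arborescence: nodes, virtual edges and the mapping of virtual edges
onto paths in the underlying graph. -/
structure VirtArb (V : Type) where
  VT : Finset V
  ET : Finset (V × V)
  pi : V × V → List V

/-- `p` is a simple directed path in `N` from `u` to `v`. -/
def IsPathInG (N : Network V) (p : List V) (u v : V) : Prop :=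
  p.Chain' (fun a b => (a, b) ∈ N.E) ∧ p.head? = some u ∧ p.getLast? = some v ∧ p.Nodup

/-- The virtual edges whose path uses the edge `e` of the underlying graph. -/
def pathUses (TA : VirtArb V) (e : V × V) : Finset (V × V) :=
  TA.ET.filter fun d => e ∈ (TA.pi d).zip (TA.pi d).tail

/-- `|π(E_T)[e]|`: the number of paths of the virtual arborescence using edge `e`. -/
def pathCount (TA : VirtArb V) (e : V × V) : ℕ := (pathUses TA e).card

/-- Total degree of node `v` with respect to the virtual edge set `ET`. -/
def degTotal (ET : Finset (V × V)) (v : V) : ℕ :=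
  (ET.filter fun e => e.1 = v).card + (ET.filter fun e => e.2 = v).card

/-- `(VT, ET, r)` is an arborescence rooted at `r` with all edges oriented towards `r`. -/
def ArborTowards (VT : Finset V) (ET : Finset (V × V)) (r : V) : Prop :=
  (∀ e ∈ ET, e.1 ∈ VT ∧ e.2 ∈ VT ∧ e.1 ≠ e.2) ∧
  (∀ v ∈ VT, v ≠ r → (ET.filter fun e => e.1 = v).card = 1) ∧
  (∀ e ∈ ET, e.1 ≠ r) ∧
  (∀ v ∈ VT, ∃ p : List V, p.Chain' (fun a b => (a, b) ∈ ET) ∧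
      p.head? = some v ∧ p.getLast? = some r)

/-- `(VT, ET, r)` is an arborescence rooted at `r` with all edges oriented away from `r`. -/
def ArborAway (VT : Finset V) (ET : Finset (V × V)) (r : V) : Prop :=
  (∀ e ∈ ET, e.1 ∈ VT ∧ e.2 ∈ VT ∧ e.1 ≠ e.2) ∧
  (∀ v ∈ VT, v ≠ r → (ET.filter fun e => e.2 = v).card = 1) ∧
  (∀ e ∈ ET, e.2 ≠ r) ∧
  (∀ v ∈ VT, ∃ p : List V, p.Chain' (fun a b => (a, b) ∈ ET) ∧
      p.head? = some r ∧ p.getLast? = some v)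

/-- Feasible solutions of A-CVSAP: all arborescence edges oriented towards the root. -/
def FeasibleACVSAP (N : Network V) (R : Request V) (TA : VirtArb V) : Prop :=
  R.root ∈ TA.VT ∧
  ArborTowards TA.VT TA.ET R.root ∧
  (∀ d ∈ TA.ET, IsPathInG N (TA.pi d) d.1 d.2) ∧
  R.T ⊆ TA.VT ∧
  TA.VT ⊆ insert R.root (R.S ∪ R.T) ∧
  (∀ t ∈ R.T, degTotal TA.ET t = 1) ∧
  degTotal TA.ET R.root ≤ R.ur ∧
  (∀ s ∈ R.S, s ∈ TA.VT → degTotal TA.ET s ≤ R.uS s + 1) ∧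
  (∀ e ∈ N.E, pathCount TA e ≤ N.uE e)

/-- Feasible solutions of M-CVSAP: all arborescence edges oriented away from the root. -/
def FeasibleMCVSAP (N : Network V) (R : Request V) (TA : VirtArb V) : Prop :=
  R.root ∈ TA.VT ∧
  ArborAway TA.VT TA.ET R.root ∧
  (∀ d ∈ TA.ET, IsPathInG N (TA.pi d) d.1 d.2) ∧
  R.T ⊆ TA.VT ∧
  TA.VT ⊆ insert R.root (R.S ∪ R.T) ∧
  (∀ t ∈ R.T, degTotal TA.ET t = 1) ∧
  degTotal TA.ET R.root ≤ R.ur ∧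
  (∀ s ∈ R.S, s ∈ TA.VT → degTotal TA.ET s ≤ R.uS s + 1) ∧
  (∀ e ∈ N.E, pathCount TA e ≤ N.uE e)

/-- Cost of a virtual arborescence. -/
noncomputable def costCVSAP (N : Network V) (R : Request V) (TA : VirtArb V) : ℝ :=
  ∑ e ∈ N.E, N.cE e * pathCount TA e + ∑ s ∈ R.S.filter (· ∈ TA.VT), R.cS s

/-! ### Statement 12: the directed Steiner cuts strictly strengthen the LP relaxation. -/

/-- Total (real) flow of `f` on the edge set `F`. -/
def fSumR (f : ExtV V × ExtV V → ℝ) (F : Finset (ExtV V × ExtV V)) : ℝ :=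
  ∑ e ∈ F, f e

/-- LP relaxation of IP-A-CVSAP *without* the directed Steiner cuts (IP-3). -/
def LPFeasibleNoCuts (N : Network V) (R : Request V) (x : V → ℝ)
    (f : ExtV V × ExtV V → ℝ) : Prop :=
  (∀ s ∈ R.S, 0 ≤ x s ∧ x s ≤ 1) ∧
  (∀ e : ExtV V × ExtV V, 0 ≤ f e) ∧
  (∀ e ∉ Eext N R, f e = 0) ∧
  -- (IP-1)
  (∀ v : V, fSumR f (outV (Eext N R) (ExtV.orig v)) =
    fSumR f (inV (Eext N R) (ExtV.orig v))) ∧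
  -- (IP-2)
  (∀ W : Finset V, ∀ s ∈ W, s ∈ R.S → x s ≤ fSumR f (outSet (ERext N R) (extW W))) ∧
  -- (IP-4)
  (∀ s ∈ R.S, x s ≤ f (ExtV.orig s, ExtV.sinkS)) ∧
  -- (IP-5)
  (∀ s ∈ R.S, f (ExtV.orig s, ExtV.sinkS) ≤ (R.uS s : ℝ) * x s) ∧
  -- (IP-6)
  f (ExtV.orig R.root, ExtV.sinkR) ≤ (R.ur : ℝ) ∧
  -- (IP-7)
  (∀ e ∈ N.E, f (ExtV.orig e.1, ExtV.orig e.2) ≤ (N.uE e : ℝ)) ∧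
  -- (IP-8)
  (∀ t ∈ R.T, f (ExtV.src, ExtV.orig t) = 1) ∧
  -- (IP-9)
  (∀ s ∈ R.S, f (ExtV.src, ExtV.orig s) = x s)

/-- The directed Steiner cuts (IP-3) for real flows. -/
def LPCuts (N : Network V) (R : Request V) (f : ExtV V × ExtV V → ℝ) : Prop :=
  ∀ W : Finset V, (W ∩ R.T).Nonempty → 1 ≤ fSumR f (outSet (ERext N R) (extW W))

/-- Objective value of the LP relaxation. -/
noncomputable def costLP (N : Network V) (R : Request V) (x : V → ℝ)
    (f : ExtV V × ExtV V → ℝ) : ℝ :=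
  ∑ e ∈ N.E, N.cE e * f (ExtV.orig e.1, ExtV.orig e.2) + ∑ s ∈ R.S, R.cS s * x s

/-- The example network on three nodes `r = 0`, `s = 1`, `t = 2` with edges
`(t,s)` and `(s,r)` of unit cost and capacity `10`. -/
def exNet : Network (Fin 3) where
  E := {((2 : Fin 3), (1 : Fin 3)), ((1 : Fin 3), (0 : Fin 3))}
  uE := fun _ => 10
  cE := fun _ => 1

/-- The example request: root `0`, Steiner site `1` (capacity `10`, activation cost `5`),
terminal `2`, root capacity `1`. -/
def exReq : Request (Fin 3) where
  root := 0
  S := {1}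
  T := {2}
  ur := 1
  cS := fun _ => 5
  uS := fun _ => 10

/-- The fractional LP point `x_s = 1/10`. -/
noncomputable def exx : Fin 3 → ℝ := fun v => if v = 1 then 1/10 else 0

/-- The fractional LP flow of the example. -/
noncomputable def exf : ExtV (Fin 3) × ExtV (Fin 3) → ℝ := fun e =>
  if e = (ExtV.orig 2, ExtV.orig 1) then 1
  else if e = (ExtV.orig 1, ExtV.orig 0) then 1/10
  else if e = (ExtV.src, ExtV.orig 2) then 1
  else if e = (ExtV.src, ExtV.orig 1) then 1/10
  else if e = (ExtV.orig 1, ExtV.sinkS) then 1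
  else if e = (ExtV.orig 0, ExtV.sinkR) then 1/10
  else 0


/-! Without (IP-3) the unit of flow leaving the terminal `t` may be absorbed by the Steiner sink
`o⁻_S` at `s`: (IP-5) then only asks for `x_s ≥ 1/10`, and (IP-2) only for `1/10` unit to reach
the root, so the cost is `1 + 1/10 + 5 · 1/10 = 1.6`. The Steiner cuts around `{t}` and `{s, t}`
force a full unit through each of `(t,s)` and `(s,r)`, so the cost is at least `2`. -/

theorem LPCuts.one_le_of_outSet_eq_singleton {N : Network V} {R : Request V}
    {f : ExtV V × ExtV V → ℝ} (hcuts : LPCuts N R f) {W : Finset V} (hW : (W ∩ R.T).Nonempty)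
    {e : ExtV V × ExtV V} (he : outSet (ERext N R) (extW W) = {e}) : 1 ≤ f e := by
  simpa [fSumR, he] using hcuts W hW

theorem costLP_exNet_exReq (x : Fin 3 → ℝ) (f : ExtV (Fin 3) × ExtV (Fin 3) → ℝ) :
    costLP exNet exReq x f = f (orig 2, orig 1) + f (orig 1, orig 0) + 5 * x 1 := by
  simp [costLP, exNet, exReq]

theorem Eext_exNet_exReq : Eext exNet exReq =
    {(orig 2, orig 1), (orig 1, orig 0), (orig 0, sinkR), (orig 1, sinkS), (src, orig 1),
      (src, orig 2)} := by
  decide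

theorem exf_nonneg (e : ExtV (Fin 3) × ExtV (Fin 3)) : 0 ≤ exf e := by
  unfold exf
  split_ifs <;> norm_num

theorem exf_eq_zero_of_notMem_Eext (e : ExtV (Fin 3) × ExtV (Fin 3))
    (he : e ∉ Eext exNet exReq) : exf e = 0 := by
  unfold exf
  split_ifs <;> subst_vars <;> first | rfl | exact absurd (by decide) he

theorem exf_conservation (v : Fin 3) :
    fSumR exf (outV (Eext exNet exReq) (orig v)) = fSumR exf (inV (Eext exNet exReq) (orig v)) := by
  fin_cases v <;>
    simp [fSumR, outV, inV, Eext_exNet_exReq, Finset.filter_insert, Finset.filter_singleton, exf]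
  norm_num

/-- A cut around a set containing `s` is crossed either by `(s,r)` or, if it also contains `r`,
by `(r,o⁻_r)`; each carries `1/10 = x_s`. -/
theorem exx_le_fSumR_exf_outSet (W : Finset (Fin 3)) (s : Fin 3) (hsW : s ∈ W) (hs : s ∈ exReq.S) :
    exx s ≤ fSumR exf (outSet (ERext exNet exReq) (extW W)) := by
  obtain rfl : s = 1 := Finset.mem_singleton.mp hs
  by_cases hrW : (0 : Fin 3) ∈ W
  · calc exx 1 = exf (orig 0, sinkR) := by simp [exx, exf]
      _ ≤ _ := Finset.single_le_sum (fun e _ => exf_nonneg e) (by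
          simp [outSet, ERext, Eext_exNet_exReq, hrW, extW])
  · calc exx 1 = exf (orig 1, orig 0) := by simp [exx, exf]
      _ ≤ _ := Finset.single_le_sum (fun e _ => exf_nonneg e) (by
          simp [outSet, ERext, Eext_exNet_exReq, extW, hrW, hsW])

theorem lpFeasibleNoCuts_exx_exf : LPFeasibleNoCuts exNet exReq exx exf := by
  refine ⟨?_, exf_nonneg, exf_eq_zero_of_notMem_Eext, exf_conservation, exx_le_fSumR_exf_outSet,
    ?_, ?_, ?_, ?_, ?_, ?_⟩
  all_goals simp [exReq, exNet, exx, exf] <;> norm_num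

theorem costLP_exx_exf : costLP exNet exReq exx exf = 1.6 := by
  rw [costLP_exNet_exReq]
  norm_num [exx, exf]

theorem two_le_costLP_of_lpCuts {x : Fin 3 → ℝ} {f : ExtV (Fin 3) × ExtV (Fin 3) → ℝ}
    (hx : 0 ≤ x 1) (hcuts : LPCuts exNet exReq f) : 2 ≤ costLP exNet exReq x f := by
  have hts : 1 ≤ f (orig 2, orig 1) :=
    hcuts.one_le_of_outSet_eq_singleton (W := {2}) ⟨2, by decide⟩ (by decide)
  have hsr : 1 ≤ f (orig 1, orig 0) :=
    hcuts.one_le_of_outSet_eq_singleton (W := {1, 2}) ⟨2, by decide⟩ (by decide)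
  rw [costLP_exNet_exReq]
  linarith

theorem steiner_cuts_strengthen_lp :
    (LPFeasibleNoCuts exNet exReq exx exf ∧ costLP exNet exReq exx exf = 1.6) ∧
    (∀ (x : Fin 3 → ℝ) (f : ExtV (Fin 3) × ExtV (Fin 3) → ℝ),
        LPFeasibleNoCuts exNet exReq x f → LPCuts exNet exReq f →
          2 ≤ costLP exNet exReq x f) :=
  ⟨⟨lpFeasibleNoCuts_exx_exf, costLP_exx_exf⟩, fun _ _ hfeas hcuts =>
    two_le_costLP_of_lpCuts (hfeas.1 1 (by decide)).1 hcuts⟩
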